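/- Let Ω* be a smooth bounded domain, y₀ ∈ ∂Ω*, and ξ a unit tangent vector to ∂Ω* at y₀. Then there exists a smooth vector field T = Σ_m T_m ∂/∂y_m defined near y₀ such that T(y₀) = √(1+|y₀|²) ξ and |T(y)|² ≤ 1 + |y|² for all y near y₀, with equality at y = y₀. -/

import Mathlib

open scoped RealInnerProductSpace

lemma key_ineq {E : Type*} [NormedAddCommGroup E] [InnerProductSpace ℝ E]
    (a b : E) : (1 + ⟪a, b⟫)^2 ≤ (1 + ‖a‖^2) * (1 + ‖b‖^2) := by
  have hcs : ⟪a, b⟫^2 ≤ ‖a‖^2 * ‖b‖^2 := by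
    have := abs_real_inner_le_norm a b
    nlinarith [abs_nonneg ⟪a, b⟫, sq_abs ⟪a, b⟫, norm_nonneg a, norm_nonneg b]
  have hab : 2 * ⟪a, b⟫ ≤ ‖a‖^2 + ‖b‖^2 := by
    have h := real_inner_self_nonneg (x := a - b)
    rw [inner_sub_sub_self] at h
    simp only [real_inner_self_eq_norm_sq] at h
    linarith [real_inner_comm a b]
  nlinarith

/-- Given a boundary point `y₀` of a smooth bounded domain and a unit
tangent vector `ξ` to the boundary at `y₀`, there is a smooth vector field `T` with
`T(y₀) = √(1+|y₀|²) ξ` and `|T(y)|² ≤ 1+|y|²` everywhere, with equality at `y₀`. -/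
theorem stmt14 (n : ℕ) (Ωs : Set (EuclideanSpace ℝ (Fin n)))
    (hb : Bornology.IsBounded Ωs) (hne : Ωs.Nonempty)
    (y₀ ξ : EuclideanSpace ℝ (Fin n)) (hy₀ : y₀ ∈ frontier Ωs) (hξ : ‖ξ‖ = 1)
    (γ : ℝ → EuclideanSpace ℝ (Fin n))
    (hγ0 : γ 0 = y₀) (hγmem : ∀ s, γ s ∈ frontier Ωs) (hγd : HasDerivAt γ ξ 0) :
    ∃ T : EuclideanSpace ℝ (Fin n) → EuclideanSpace ℝ (Fin n),
      ContDiff ℝ (⊤ : ℕ∞) T ∧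
      T y₀ = Real.sqrt (1 + ‖y₀‖ ^ 2) • ξ ∧
      (∀ y, ‖T y‖ ^ 2 ≤ 1 + ‖y‖ ^ 2) ∧
      ‖T y₀‖ ^ 2 = 1 + ‖y₀‖ ^ 2 := by
  set c : ℝ := Real.sqrt (1 + ‖y₀‖ ^ 2) with hc
  have hcpos : 0 < c := Real.sqrt_pos.mpr (by positivity)
  have hc2 : c ^ 2 = 1 + ‖y₀‖ ^ 2 := Real.sq_sqrt (by positivity)
  refine ⟨fun y => ((1 + ⟪y₀, y⟫) / c) • ξ, ?_, ?_, ?_, ?_⟩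
  · exact (((contDiff_const.add (innerSL ℝ y₀).contDiff).div_const c).smul contDiff_const)
  · show ((1 + ⟪y₀, y₀⟫) / c) • ξ = c • ξ
    rw [real_inner_self_eq_norm_sq, ← hc2]
    congr 1
    field_simp
  · intro y
    have h := key_ineq y₀ y
    rw [norm_smul, hξ, mul_one, Real.norm_eq_abs, sq_abs, div_pow, hc2]
    rw [div_le_iff₀ (by positivity)] at *
    nlinarith
  · rw [norm_smul, hξ, mul_one, Real.norm_eq_abs, sq_abs, real_inner_self_eq_norm_sq,
      ← hc2, div_pow]
    field_simp
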